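/- In dimension one, for any n ∈ ℕ and any signs ε_I = ±1 indexed by dyadic intervals I ⊆ [0,1) with |I| ≥ 2^{-n}, the supremum over [0,1) of Σ_{|I| ≥ 2^{-n}} ε_I h_I is at least n+1. -/
import Mathlib


open Finset

/-- The L^∞-normalized Haar function of the dyadic interval `[m/2^k, (m+1)/2^k)`:
`-1` on the left half, `+1` on the right half, `0` outside. -/
noncomputable def haar (k m : ℕ) (x : ℝ) : ℝ :=
  if (m : ℝ) / 2 ^ k ≤ x ∧ x < ((m : ℝ) + 1) / 2 ^ k then
    (if x < (2 * (m : ℝ) + 1) / 2 ^ (k + 1) then -1 else 1)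
  else 0

/-- The one-dimensional sum `∑_{I dyadic, |I| ≥ 2^{-n}} α_I h_I`. -/
noncomputable def sum1 (n : ℕ) (α : ℕ → ℕ → ℝ) (x : ℝ) : ℝ :=
  ∑ k ∈ Finset.range (n + 1), ∑ m ∈ Finset.range (2 ^ k), α k m * haar k m x

/-- The nested sequence of dyadic intervals: at each step descend into the half
on which `ε_I h_I = +1`. -/
noncomputable def pick (ε : ℕ → ℕ → ℝ) : ℕ → ℕ
  | 0 => 0
  | k + 1 => if ε k (pick ε k) = 1 then 2 * pick ε k + 1 else 2 * pick ε k

lemma pick_succ_le (ε : ℕ → ℕ → ℝ) (k : ℕ) :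
    2 * pick ε k ≤ pick ε (k + 1) ∧ pick ε (k + 1) ≤ 2 * pick ε k + 1 := by
  simp only [pick]; split <;> omega

lemma pick_lt (ε : ℕ → ℕ → ℝ) : ∀ k, pick ε k < 2 ^ k
  | 0 => by simp [pick]
  | k + 1 => by
    have h1 := pick_lt ε k
    have h2 := (pick_succ_le ε k).2
    have h3 : 2 ^ (k + 1) = 2 * 2 ^ k := by ring
    omega

lemma pick_nested (ε : ℕ → ℕ → ℝ) (k : ℕ) (j : ℕ) (h : k ≤ j) :
    pick ε k * 2 ^ (j - k) ≤ pick ε j ∧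
      pick ε j + 1 ≤ (pick ε k + 1) * 2 ^ (j - k) := by
  induction j with
  | zero =>
    have : k = 0 := by omega
    subst this; simp
  | succ j ih =>
    rcases Nat.lt_or_ge k (j + 1) with h' | h'
    · have hk : k ≤ j := by omega
      obtain ⟨h1, h2⟩ := ih hk
      obtain ⟨h3, h4⟩ := pick_succ_le ε j
      have he : j + 1 - k = (j - k) + 1 := by omega
      rw [he, pow_succ]
      constructor <;> nlinarith
    · have : k = j + 1 := by omega
      subst this; simp

lemma haar_abs_le (k m : ℕ) (x : ℝ) : |haar k m x| ≤ 1 := by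
  unfold haar
  split
  · split <;> norm_num
  · norm_num

/-- One-dimensional signed estimate: the supremum over `[0,1)` of
`∑_{|I| ≥ 2^{-n}} ε_I h_I` is at least `n+1`. -/
theorem one_dim_signed_estimate (n : ℕ) (ε : ℕ → ℕ → ℝ)
    (hε : ∀ k m, ε k m = 1 ∨ ε k m = -1) :
    sSup ((fun x => sum1 n ε x) '' Set.Ico (0 : ℝ) 1) ≥ n + 1 := by
  set N := pick ε (n + 1) with hN
  set x : ℝ := (N : ℝ) / 2 ^ (n + 1) with hx
  -- x ∈ [0,1)
  have hxmem : x ∈ Set.Ico (0 : ℝ) 1 := by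
    constructor
    · positivity
    · rw [hx, div_lt_one (by positivity)]
      exact_mod_cast pick_lt ε (n + 1)
  -- the interval bounds at each level
  have key : ∀ k ≤ n, ε k (pick ε k) * haar k (pick ε k) x = 1 ∧
      ((pick ε k : ℝ) / 2 ^ k ≤ x ∧ x < ((pick ε k : ℝ) + 1) / 2 ^ k) := by
    intro k hk
    set m := pick ε k with hm
    set p := pick ε (k + 1) with hp
    obtain ⟨hn1, hn2⟩ := pick_nested ε (k + 1) (n + 1) (by omega)
    have hnk : n + 1 - (k + 1) = n - k := by omega
    rw [hnk] at hn1 hn2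
    -- real versions
    have hr1 : (p : ℝ) * 2 ^ (n - k) ≤ (N : ℝ) := by exact_mod_cast hn1
    have hr2 : (N : ℝ) < ((p : ℝ) + 1) * 2 ^ (n - k) := by
      have : (N : ℝ) + 1 ≤ ((p : ℝ) + 1) * 2 ^ (n - k) := by exact_mod_cast hn2
      linarith
    have hpow : (2 : ℝ) ^ (n + 1) = 2 ^ (k + 1) * 2 ^ (n - k) := by
      rw [← pow_add]
      congr 1
      omega
    have hx1 : (p : ℝ) / 2 ^ (k + 1) ≤ x := by
      rw [hx, div_le_div_iff₀ (by positivity) (by positivity), hpow]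
      nlinarith [hr1, pow_pos (by norm_num : (0:ℝ) < 2) (k + 1)]
    have hx2 : x < ((p : ℝ) + 1) / 2 ^ (k + 1) := by
      rw [hx, div_lt_div_iff₀ (by positivity) (by positivity), hpow]
      nlinarith [hr2, pow_pos (by norm_num : (0:ℝ) < 2) (k + 1)]
    have h2k : (2 : ℝ) ^ (k + 1) = 2 * 2 ^ k := by ring
    have h2kpos : (0 : ℝ) < 2 ^ k := by positivity
    rcases hε k m with hε1 | hε1
    · -- right half: p = 2m + 1
      have hpe : p = 2 * m + 1 := by rw [hp, pick]; simp [← hm, hε1]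
      have hpr : (p : ℝ) = 2 * (m : ℝ) + 1 := by exact_mod_cast hpe
      rw [hpr] at hx1 hx2
      have hxl : (m : ℝ) / 2 ^ k ≤ x := by
        rw [div_le_iff₀ h2kpos]
        rw [div_le_iff₀ (by positivity), h2k] at hx1
        linarith
      have hxr : x < ((m : ℝ) + 1) / 2 ^ k := by
        rw [lt_div_iff₀ h2kpos]
        rw [lt_div_iff₀ (by positivity), h2k] at hx2
        linarith
      have hmid : ¬ x < (2 * (m : ℝ) + 1) / 2 ^ (k + 1) := not_lt.mpr hx1
      refine ⟨?_, hxl, hxr⟩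
      rw [haar, if_pos ⟨hxl, hxr⟩, if_neg hmid, hε1]
      ring
    · -- left half: p = 2m
      have hpe : p = 2 * m := by
        rw [hp, pick]
        simp only [← hm]
        rw [if_neg (by rw [hε1]; norm_num)]
      have hpr : (p : ℝ) = 2 * (m : ℝ) := by exact_mod_cast hpe
      rw [hpr] at hx1 hx2
      have hxl : (m : ℝ) / 2 ^ k ≤ x := by
        rw [div_le_iff₀ h2kpos]
        rw [div_le_iff₀ (by positivity), h2k] at hx1
        linarith
      have hmid : x < (2 * (m : ℝ) + 1) / 2 ^ (k + 1) := hx2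
      have hxr : x < ((m : ℝ) + 1) / 2 ^ k := by
        rw [lt_div_iff₀ h2kpos]
        rw [lt_div_iff₀ (by positivity), h2k] at hx2
        linarith
      refine ⟨?_, hxl, hxr⟩
      rw [haar, if_pos ⟨hxl, hxr⟩, if_pos hmid, hε1]
      ring
  -- value of the sum at x
  have hval : sum1 n ε x = n + 1 := by
    rw [sum1]
    have : ∀ k ∈ Finset.range (n + 1),
        ∑ m ∈ Finset.range (2 ^ k), ε k m * haar k m x = 1 := by
      intro k hkmem
      have hk : k ≤ n := by
        have := Finset.mem_range.mp hkmem
        omega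
      obtain ⟨hone, hxl, hxr⟩ := key k hk
      rw [Finset.sum_eq_single_of_mem (pick ε k)
        (Finset.mem_range.mpr (pick_lt ε k)) ?_]
      · exact hone
      · intro m' hm' hne
        have hm'lt : m' < 2 ^ k := Finset.mem_range.mp hm'
        have hz : haar k m' x = 0 := by
          rw [haar, if_neg]
          rintro ⟨h1', h2'⟩
          have h2kpos : (0 : ℝ) < 2 ^ k := by positivity
          rcases lt_or_gt_of_ne hne with h | h
          · have hle : ((m' : ℝ) + 1) / 2 ^ k ≤ (pick ε k : ℝ) / 2 ^ k := by
              gcongr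
              exact_mod_cast h
            linarith
          · have hle : ((pick ε k : ℝ) + 1) / 2 ^ k ≤ (m' : ℝ) / 2 ^ k := by
              gcongr
              exact_mod_cast h
            linarith
        rw [hz, mul_zero]
    rw [Finset.sum_congr rfl this]
    simp
  -- conclude
  have hbdd : BddAbove ((fun x => sum1 n ε x) '' Set.Ico (0 : ℝ) 1) := by
    refine ⟨∑ k ∈ Finset.range (n + 1), (2 ^ k : ℝ), ?_⟩
    rintro y ⟨z, -, rfl⟩
    simp only [sum1]
    apply Finset.sum_le_sum
    intro k _
    calc ∑ m ∈ Finset.range (2 ^ k), ε k m * haar k m z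
        ≤ ∑ m ∈ Finset.range (2 ^ k), (1 : ℝ) := by
          apply Finset.sum_le_sum
          intro m _
          calc ε k m * haar k m z ≤ |ε k m * haar k m z| := le_abs_self _
            _ = |ε k m| * |haar k m z| := abs_mul _ _
            _ ≤ 1 * 1 := by
                apply mul_le_mul _ (haar_abs_le k m z) (abs_nonneg _)
                  (by norm_num)
                rcases hε k m with h | h <;> rw [h] <;> norm_num
            _ = 1 := by norm_num
      _ = 2 ^ k := by simp
  calc ((n : ℝ) + 1) = sum1 n ε x := hval.symm
    _ ≤ sSup ((fun x => sum1 n ε x) '' Set.Ico (0 : ℝ) 1) :=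
        le_csSup hbdd ⟨x, hxmem, rfl⟩
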